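/- For all j ∈ ℝ³ with j₃ ≠ 0, all k ∈ ℝ³, and all r ∈ {−1,+1}: |V X_j^r · k| ≤ √2 |k'| + |j'| |k₃| / |j₃|. -/

import Mathlib

noncomputable section
open scoped Classical

abbrev V3 := Fin 3 → ℝ

/-- Euclidean norm of a vector in ℝ³. -/
def enorm3 (k : V3) : ℝ := Real.sqrt (k 0 ^ 2 + k 1 ^ 2 + k 2 ^ 2)

/-- Horizontal part k' = (k₁, k₂, 0). -/
def horiz (k : V3) : V3 := ![k 0, k 1, 0]

/-- The lattice 𝒵_L of wavevectors. -/
def ZL (L₁ L₂ L₃ : ℝ) : Set V3 :=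
  {k | ∃ n : Fin 3 → ℤ,
    k = ![2 * Real.pi * (n 0 : ℝ) / L₁, 2 * Real.pi * (n 1 : ℝ) / L₂,
          2 * Real.pi * (n 2 : ℝ) / L₃]}

/-- Inertia–gravity frequency ω_k^s = s|k|/k₃. -/
def omg (k : V3) (s : ℝ) : ℝ := s * enorm3 k / k 2

/-- Slow eigenvector X_k^0. -/
def X0 (k : V3) : Fin 3 → ℂ :=
  if horiz k = 0 then ![0, 0, ((Real.sign (k 2) : ℝ) : ℂ)]
  else ![((k 1 / enorm3 k : ℝ) : ℂ), ((-(k 0) / enorm3 k : ℝ) : ℂ), ((k 2 / enorm3 k : ℝ) : ℂ)]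

/-- Fast eigenvectors X_k^s, s = ±1. -/
def Xs (k : V3) (s : ℝ) : Fin 3 → ℂ :=
  if horiz k = 0 then
    ![(((Real.sqrt 2)⁻¹ : ℝ) : ℂ), -Complex.I * s * (((Real.sqrt 2)⁻¹ : ℝ) : ℂ), 0]
  else
    ![(((-(k 1) * k 2 : ℝ) : ℂ) + Complex.I * s * k 0 * enorm3 k) /
        ((Real.sqrt 2 * enorm3 (horiz k) * enorm3 k : ℝ) : ℂ),
      (((k 0 * k 2 : ℝ) : ℂ) + Complex.I * s * k 1 * enorm3 k) /
        ((Real.sqrt 2 * enorm3 (horiz k) * enorm3 k : ℝ) : ℂ),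
      ((enorm3 (horiz k) ^ 2 : ℝ) : ℂ) /
        ((Real.sqrt 2 * enorm3 (horiz k) * enorm3 k : ℝ) : ℂ)]

/-- The incompressible-velocity vector V X_j^r. -/
def VX (j : V3) (r : ℝ) : Fin 3 → ℂ :=
  if horiz j = 0 then Xs j r
  else
    ![(((-(j 1) * j 2 : ℝ) : ℂ) + Complex.I * r * j 0 * enorm3 j) /
        ((Real.sqrt 2 * enorm3 j * enorm3 (horiz j) : ℝ) : ℂ),
      (((j 0 * j 2 : ℝ) : ℂ) + Complex.I * r * j 1 * enorm3 j) /
        ((Real.sqrt 2 * enorm3 j * enorm3 (horiz j) : ℝ) : ℂ),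
      (-Complex.I * r * ((enorm3 (horiz j) ^ 2 * enorm3 j / j 2 : ℝ) : ℂ)) /
        ((Real.sqrt 2 * enorm3 j * enorm3 (horiz j) : ℝ) : ℂ)]

/-- Bilinear pairing a·b on ℂ³. -/
def dotC (a b : Fin 3 → ℂ) : ℂ := a 0 * b 0 + a 1 * b 1 + a 2 * b 2

/-- Pairing of a complex vector with a real vector. -/
def dotR (a : Fin 3 → ℂ) (k : V3) : ℂ :=
  a 0 * (k 0 : ℂ) + a 1 * (k 1 : ℂ) + a 2 * (k 2 : ℂ)

/-- The interaction coefficient B_{jkl}^{rs0}. -/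
def Brs0 (M : ℝ) (j k l : V3) (r s : ℝ) : ℂ :=
  if j + k = l ∧ j 2 * k 2 ≠ 0 ∧ l ≠ 0 then
    Complex.I * M * dotR (VX j r) k * dotC (Xs k s) (X0 l)
  else 0

/-
For `j' ≠ 0` write `V X_j^r · k = H - i r |j'| k₃ / (√2 j₃)`, where the horizontal part `H` has
real part `j₃ (j₁k₂ - j₂k₁) / (√2|j||j'|)` and imaginary part `r (j₁k₁ + j₂k₂) / (√2|j'|)`.
Since `j₃² ≤ |j|²`, Lagrange's identity `(j₁k₂ - j₂k₁)² + (j₁k₁ + j₂k₂)² = |j'|²|k'|²` gives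
`|H| ≤ |k'|/√2`; for `j' = 0` the pairing is `(k₁ - i r k₂)/√2` of modulus `|k'|/√2`. Hence
`|V X_j^r · k| ≤ (|k'| + |j'||k₃|/|j₃|)/√2`, and `1/√2 ≤ 1 ≤ √2`.
-/

lemma enorm3_sq (k : V3) : enorm3 k ^ 2 = k 0 ^ 2 + k 1 ^ 2 + k 2 ^ 2 :=
  Real.sq_sqrt (by positivity)

lemma enorm3_horiz (k : V3) : enorm3 (horiz k) = Real.sqrt (k 0 ^ 2 + k 1 ^ 2) := by
  simp [enorm3, horiz]

lemma enorm3_horiz_sq (k : V3) : enorm3 (horiz k) ^ 2 = k 0 ^ 2 + k 1 ^ 2 := by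
  rw [enorm3_horiz, Real.sq_sqrt (by positivity)]

lemma enorm3_nonneg (k : V3) : 0 ≤ enorm3 k := Real.sqrt_nonneg _

lemma enorm3_zero : enorm3 0 = 0 := by simp [enorm3]

lemma horiz_eq_zero_iff {k : V3} : horiz k = 0 ↔ k 0 = 0 ∧ k 1 = 0 := by
  constructor
  · intro h
    exact ⟨by simpa [horiz] using congrFun h 0, by simpa [horiz] using congrFun h 1⟩
  · rintro ⟨h0, h1⟩
    ext i
    fin_cases i <;> simp [horiz, h0, h1]

lemma enorm3_horiz_pos {k : V3} (hk : horiz k ≠ 0) : 0 < enorm3 (horiz k) := by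
  rw [Ne, horiz_eq_zero_iff, not_and_or] at hk
  rw [enorm3_horiz, Real.sqrt_pos]
  rcases hk with hk | hk <;> positivity

lemma enorm3_horiz_le (k : V3) : enorm3 (horiz k) ≤ enorm3 k := by
  rw [enorm3_horiz, enorm3]
  exact Real.sqrt_le_sqrt (by nlinarith [sq_nonneg (k 2)])

open Complex in
lemma dotR_VX_of_horiz_eq_zero {j : V3} (hj : horiz j = 0) (r : ℝ) (k : V3) :
    dotR (VX j r) k = ((k 0 : ℂ) + ((-(r * k 1) : ℝ) : ℂ) * I) / (Real.sqrt 2 : ℂ) := by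
  simp only [VX, Xs, if_pos hj, dotR, Matrix.cons_val_zero, Matrix.cons_val_one,
    Matrix.cons_val_two, Matrix.tail_cons, Matrix.head_cons]
  push_cast
  ring

open Complex in
lemma dotR_VX_of_horiz_ne_zero {j : V3} (hj : horiz j ≠ 0) (r : ℝ) (k : V3) :
    dotR (VX j r) k =
      (((j 2 * (j 0 * k 1 - j 1 * k 0) : ℝ) : ℂ)
          + ((r * enorm3 j * (j 0 * k 0 + j 1 * k 1) : ℝ) : ℂ) * I)
        / ((Real.sqrt 2 * enorm3 j * enorm3 (horiz j) : ℝ) : ℂ)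
      - ((r * enorm3 (horiz j) * k 2 / j 2 / Real.sqrt 2 : ℝ) : ℂ) * I := by
  have hh : (enorm3 (horiz j) : ℂ) ≠ 0 := by exact_mod_cast (enorm3_horiz_pos hj).ne'
  have hn : (enorm3 j : ℂ) ≠ 0 := by
    exact_mod_cast ((enorm3_horiz_pos hj).trans_le (enorm3_horiz_le j)).ne'
  simp only [VX, if_neg hj, dotR, Matrix.cons_val_zero, Matrix.cons_val_one,
    Matrix.cons_val_two, Matrix.tail_cons, Matrix.head_cons]
  push_cast
  field_simp
  ring

lemma norm_horizontal_part_le {j : V3} (hj : horiz j ≠ 0) {r : ℝ} (hr : |r| = 1) (k : V3) :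
    ‖(((j 2 * (j 0 * k 1 - j 1 * k 0) : ℝ) : ℂ)
          + ((r * enorm3 j * (j 0 * k 0 + j 1 * k 1) : ℝ) : ℂ) * Complex.I)
        / ((Real.sqrt 2 * enorm3 j * enorm3 (horiz j) : ℝ) : ℂ)‖
      ≤ enorm3 (horiz k) / Real.sqrt 2 := by
  set n := enorm3 j
  set h := enorm3 (horiz j)
  have hh : 0 < h := enorm3_horiz_pos hj
  have hn : 0 < n := hh.trans_le (enorm3_horiz_le j)
  have hr2 : r ^ 2 = 1 := by rw [← sq_abs, hr, one_pow]
  have hj2 : j 2 ^ 2 ≤ n ^ 2 := by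
    rw [enorm3_sq]; nlinarith [sq_nonneg (j 0), sq_nonneg (j 1)]
  have lagrange : (j 0 * k 1 - j 1 * k 0) ^ 2 + (j 0 * k 0 + j 1 * k 1) ^ 2
      = h ^ 2 * enorm3 (horiz k) ^ 2 := by
    rw [enorm3_horiz_sq, enorm3_horiz_sq]; ring
  have numerator_le : Real.sqrt ((j 2 * (j 0 * k 1 - j 1 * k 0)) ^ 2
      + (r * n * (j 0 * k 0 + j 1 * k 1)) ^ 2) ≤ n * h * enorm3 (horiz k) := by
    rw [Real.sqrt_le_iff]
    refine ⟨by positivity [enorm3_nonneg (horiz k)], ?_⟩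
    calc (j 2 * (j 0 * k 1 - j 1 * k 0)) ^ 2 + (r * n * (j 0 * k 0 + j 1 * k 1)) ^ 2
        = j 2 ^ 2 * (j 0 * k 1 - j 1 * k 0) ^ 2 + n ^ 2 * (j 0 * k 0 + j 1 * k 1) ^ 2 := by
          linear_combination (n * (j 0 * k 0 + j 1 * k 1)) ^ 2 * hr2
      _ ≤ n ^ 2 * ((j 0 * k 1 - j 1 * k 0) ^ 2 + (j 0 * k 0 + j 1 * k 1) ^ 2) := by
          nlinarith [sq_nonneg (j 0 * k 1 - j 1 * k 0)]
      _ = (n * h * enorm3 (horiz k)) ^ 2 := by rw [lagrange]; ring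
  calc _ = Real.sqrt ((j 2 * (j 0 * k 1 - j 1 * k 0)) ^ 2
        + (r * n * (j 0 * k 0 + j 1 * k 1)) ^ 2) / (Real.sqrt 2 * n * h) := by
        rw [norm_div, Complex.norm_add_mul_I, Complex.norm_real, Real.norm_of_nonneg (by positivity)]
    _ ≤ n * h * enorm3 (horiz k) / (Real.sqrt 2 * n * h) := by gcongr
    _ = enorm3 (horiz k) / Real.sqrt 2 := by field_simp

lemma norm_vertical_part {j : V3} {r : ℝ} (hr : |r| = 1) (k : V3) :
    ‖((r * enorm3 (horiz j) * k 2 / j 2 / Real.sqrt 2 : ℝ) : ℂ) * Complex.I‖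
      = enorm3 (horiz j) * |k 2| / |j 2| / Real.sqrt 2 := by
  rw [norm_mul, Complex.norm_I, mul_one, Complex.norm_real, Real.norm_eq_abs]
  simp only [abs_div, abs_mul, hr, one_mul, abs_of_nonneg (enorm3_nonneg _),
    abs_of_nonneg (Real.sqrt_nonneg 2)]

theorem norm_dotR_VX_le (j : V3) {r : ℝ} (hr : |r| = 1) (k : V3) :
    ‖dotR (VX j r) k‖ ≤ (enorm3 (horiz k) + enorm3 (horiz j) * |k 2| / |j 2|) / Real.sqrt 2 := by
  by_cases hj : horiz j = 0
  · have hr2 : r ^ 2 = 1 := by rw [← sq_abs, hr, one_pow]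
    rw [dotR_VX_of_horiz_eq_zero hj, norm_div, Complex.norm_add_mul_I, Complex.norm_real,
      Real.norm_of_nonneg (Real.sqrt_nonneg 2), neg_sq, mul_pow, hr2, one_mul, ← enorm3_horiz,
      hj, enorm3_zero, zero_mul, zero_div, add_zero]
  · rw [dotR_VX_of_horiz_ne_zero hj, add_div (enorm3 (horiz k))]
    exact (norm_sub_le _ _).trans
      (add_le_add (norm_horizontal_part_le hj hr k) (norm_vertical_part hr k).le)

theorem VX_dot_bound_general
    (j k : V3)
    (r : ℝ) (hr : r = 1 ∨ r = -1) :
    ‖dotR (VX j r) k‖ ≤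
      Real.sqrt 2 * enorm3 (horiz k) + enorm3 (horiz j) * |k 2| / |j 2| := by
  have habs : |r| = 1 := by rcases hr with rfl | rfl <;> simp
  have hk : 0 ≤ enorm3 (horiz k) := enorm3_nonneg _
  have hvert : 0 ≤ enorm3 (horiz j) * |k 2| / |j 2| := by positivity [enorm3_nonneg (horiz j)]
  calc ‖dotR (VX j r) k‖
      ≤ (enorm3 (horiz k) + enorm3 (horiz j) * |k 2| / |j 2|) / Real.sqrt 2 :=
        norm_dotR_VX_le j habs k
    _ ≤ enorm3 (horiz k) + enorm3 (horiz j) * |k 2| / |j 2| :=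
        div_le_self (add_nonneg hk hvert) Real.one_lt_sqrt_two.le
    _ ≤ Real.sqrt 2 * enorm3 (horiz k) + enorm3 (horiz j) * |k 2| / |j 2| := by
        gcongr
        exact le_mul_of_one_le_left hk Real.one_lt_sqrt_two.le

/-- the bound (2.36) on V X_j^r · k. -/
theorem VX_dot_bound
    (j k : V3) (hj3 : j 2 ≠ 0)
    (r : ℝ) (hr : r = 1 ∨ r = -1) :
    ‖dotR (VX j r) k‖ ≤
      Real.sqrt 2 * enorm3 (horiz k) + enorm3 (horiz j) * |k 2| / |j 2| :=
  VX_dot_bound_general j k r hr
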